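/- arXiv:1909.10211 — 8 statements merged into one kernel-verified Lean document; each statement's English description precedes it below -/
import Mathlib

section
/- Let X be a set on which every pair of equivalence relations permutes (R ∘ S = S ∘ R for all equivalence relations R, S on X, where the composite of equivalence relations is again an equivalence relation equal to their join). If the Triangular Lemma holds for all equivalence relations on X (i.e., R ∩ S ≤ T implies R ∩ (T ∘ S) ≤ T), then the Trapezoid Lemma holds for all equivalence relations on X (i.e., R ∩ S ≤ T implies R ∩ (S ∘ T ∘ S) ≤ T). -/
/-- `Comp B A` relates `x` to `z` iff there is `y` with `x A y` and `y B z`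
(the composite `B ∘ A`: apply `A` first, then `B`). -/
def Comp {X : Type*} (B A : X → X → Prop) : X → X → Prop :=
  fun x z => ∃ y, A x y ∧ B y z

theorem Comp.of_comp_comp_of_comm {X : Type*} {A B : X → X → Prop}
    (hAB : Comp B A = Comp A B) (hA : ∀ {x y z}, A x y → A y z → A x z) {u v : X}
    (h : Comp A (Comp B A) u v) : Comp A B u v := by
  obtain ⟨y, hBAuy, hAyv⟩ := h
  rw [hAB] at hBAuy
  obtain ⟨w, hBuw, hAwy⟩ := hBAuy
  exact ⟨w, hBuw, hA hAwy hAyv⟩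

/-- On a set where equivalence relations permute, the Triangular Lemma
(for all equivalence relations) implies the Trapezoid Lemma. -/
theorem trapezoid_of_triangular_permutable {X : Type*}
    (hPerm : ∀ R S : X → X → Prop, Equivalence R → Equivalence S →
      Comp R S = Comp S R)
    (hTL : ∀ R S T : X → X → Prop, Equivalence R → Equivalence S → Equivalence T →
      (∀ x y, R x y → S x y → T x y) →
      ∀ u v, R u v → Comp S T u v → T u v) :
    ∀ R S T : X → X → Prop, Equivalence R → Equivalence S → Equivalence T →
      (∀ x y, R x y → S x y → T x y) →
      ∀ u v, R u v → Comp S (Comp T S) u v → T u v := by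
  intro R S T hR hS hT hRS u v hRuv hSTS
  have hST : Comp S T u v := Comp.of_comp_comp_of_comm (hPerm T S hT hS) hS.trans hSTS
  exact hTL R S T hR hS hT hRS u v hRuv hST
end

section
/- Let X be a set on which every pair of equivalence relations permutes, so that the join of equivalence relations R and S equals their composite R ∘ S. If the Trapezoid Lemma holds for all triples of equivalence relations on X, then the lattice of equivalence relations on X is distributive. -/
namespace Equivalence

variable {X : Type*} {A B : X → X → Prop}

theorem inf (hA : Equivalence A) (hB : Equivalence B) :
    Equivalence (fun x y => A x y ∧ B x y) :=
  ⟨fun x => ⟨hA.refl x, hB.refl x⟩, fun h => ⟨hA.symm h.1, hB.symm h.2⟩,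
    fun h h' => ⟨hA.trans h.1 h'.1, hB.trans h.2 h'.2⟩⟩

theorem comp (hA : Equivalence A) (hB : Equivalence B) (hcomm : Comp A B = Comp B A) :
    Equivalence (Comp A B) := by
  refine ⟨fun x => ⟨x, hB.refl x, hA.refl x⟩, ?_, ?_⟩
  · rintro x z ⟨y, hxy, hyz⟩
    rw [hcomm]
    exact ⟨y, hA.symm hyz, hB.symm hxy⟩
  · rintro x z w ⟨y, hxy, hyz⟩ ⟨y', hzy', hy'w⟩
    obtain ⟨c, hyc, hcy'⟩ : Comp A B y y' := hcomm ▸ ⟨z, hyz, hzy'⟩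
    exact ⟨c, hB.trans hxy hyc, hA.trans hcy' hy'w⟩

end Equivalence

def SatisfiesTrapezoidLemma (X : Type*) : Prop :=
  ∀ R S T : X → X → Prop, Equivalence R → Equivalence S → Equivalence T →
    (∀ x y, R x y → S x y → T x y) → ∀ u v, R u v → Comp S (Comp T S) u v → T u v

theorem SatisfiesTrapezoidLemma.inf_comp_le {X : Type*} (hTpL : SatisfiesTrapezoidLemma X)
    {R S U : X → X → Prop} (hR : Equivalence R) (hS : Equivalence S) (hU : Equivalence U)
    (hle : ∀ x y, R x y → S x y → U x y) {x y : X} (hRxy : R x y) (hSU : Comp S U x y) :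
    U x y :=
  have ⟨a, hxa, hay⟩ := hSU
  hTpL R S U hR hS hU hle x y hRxy ⟨a, ⟨x, hS.refl x, hxa⟩, hay⟩

/-- On a set where equivalence relations permute (so the join of two equivalence
relations is their composite), the Trapezoid Lemma implies that the lattice of
equivalence relations is distributive: `R ∩ (S ∨ T) = (R ∩ S) ∨ (R ∩ T)`,
where joins are composites. -/
theorem distrib_of_trapezoid_permutable {X : Type*}
    (hPerm : ∀ R S : X → X → Prop, Equivalence R → Equivalence S →
      Comp R S = Comp S R)
    (hTpL : ∀ R S T : X → X → Prop, Equivalence R → Equivalence S → Equivalence T →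
      (∀ x y, R x y → S x y → T x y) →
      ∀ u v, R u v → Comp S (Comp T S) u v → T u v) :
    ∀ R S T : X → X → Prop, Equivalence R → Equivalence S → Equivalence T →
      ∀ x y, (R x y ∧ Comp T S x y) ↔
        Comp (fun a b => R a b ∧ T a b) (fun a b => R a b ∧ S a b) x y := by
  intro R S T hR hS hT x y
  refine ⟨?_, fun ⟨m, ⟨hxm, hSxm⟩, hmy, hTmy⟩ => ⟨hR.trans hxm hmy, m, hSxm, hTmy⟩⟩
  rintro ⟨hxy, w, hxw, hwy⟩
  have hRS := hR.inf hS
  have hRT := hR.inf hT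
  have hP := hRT.comp hRS (hPerm _ _ hRT hRS)
  have hV := hS.comp hP (hPerm _ _ hS hP)
  have hVxy : Comp S (Comp _ _) x y :=
    SatisfiesTrapezoidLemma.inf_comp_le hTpL hR hT hV
      (fun a b hRab hTab => ⟨b, ⟨a, ⟨hR.refl a, hS.refl a⟩, hRab, hTab⟩, hS.refl b⟩)
      hxy ⟨w, ⟨x, hP.refl x, hxw⟩, hwy⟩
  exact SatisfiesTrapezoidLemma.inf_comp_le hTpL hR hS hP
    (fun a b hRab hSab => ⟨b, ⟨hRab, hSab⟩, hR.refl b, hT.refl b⟩) hxy hVxy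
end

section
/- If the lattice of equivalence relations on a set X is distributive (and equivalence relations on X permute, so joins are composites), then the Trapezoid Lemma holds on X: for equivalence relations R, S, T with R ∩ S ≤ T, one has R ∩ (S ∘ T ∘ S) ≤ T. -/
theorem comp_of_comp_comp_of_comm {X : Type*} {S T : X → X → Prop} [IsTrans X S]
    (hST : Comp S T = Comp T S) {u v : X} (h : Comp S (Comp T S) u v) : Comp T S u v := by
  obtain ⟨y, ⟨w, hSuw, hTwy⟩, hSyv⟩ := h
  have hTSwv : Comp T S w v := hST ▸ ⟨y, hTwy, hSyv⟩
  obtain ⟨z, hSwz, hTzv⟩ := hTSwv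
  exact ⟨z, _root_.trans hSuw hSwz, hTzv⟩

theorem rel_of_comp_inf {X : Type*} {R S T : X → X → Prop} [IsTrans X T]
    (hRST : ∀ x y, R x y → S x y → T x y) {u v : X}
    (h : Comp (fun a b => R a b ∧ T a b) (fun a b => R a b ∧ S a b) u v) : T u v := by
  obtain ⟨m, ⟨hRum, hSum⟩, -, hTmv⟩ := h
  exact _root_.trans (hRST u m hRum hSum) hTmv

/-- If equivalence relations on `X` permute (so joins are composites) and the
lattice of equivalence relations is distributive, then the Trapezoid Lemma holds. -/
theorem trapezoid_of_distrib_permutable {X : Type*}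
    (hPerm : ∀ R S : X → X → Prop, Equivalence R → Equivalence S →
      Comp R S = Comp S R)
    (hDist : ∀ R S T : X → X → Prop, Equivalence R → Equivalence S → Equivalence T →
      ∀ x y, (R x y ∧ Comp T S x y) ↔
        Comp (fun a b => R a b ∧ T a b) (fun a b => R a b ∧ S a b) x y) :
    ∀ R S T : X → X → Prop, Equivalence R → Equivalence S → Equivalence T →
      (∀ x y, R x y → S x y → T x y) →
      ∀ u v, R u v → Comp S (Comp T S) u v → T u v := by
  intro R S T hR hS hT hRST u v hRuv hSTS
  have := hS.isTrans
  have := hT.isTrans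
  have hTS : Comp T S u v := comp_of_comp_comp_of_comm (hPerm S T hS hT) hSTS
  exact rel_of_comp_inf hRST ((hDist R S T hR hS hT u v).mp ⟨hRuv, hTS⟩)
end

section
/- Let X be a set such that for all equivalence relations R, S on X, R ∘ S ∘ R = S ∘ R ∘ S and this composite is the join R ∨ S in the lattice of equivalence relations on X. If the Trapezoid Lemma holds for all equivalence relations on X, then the lattice of equivalence relations on X is distributive. -/
/-- `Join3 A B` is the relation `A ∘ B ∘ A` (apply `A`, then `B`, then `A`). -/
def Join3 {X : Type*} (A B : X → X → Prop) : X → X → Prop :=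
  Comp A (Comp B A)

/-!
Two applications of the Trapezoid Lemma push `R ∩ (S ∨ T)` down to `(R ∩ S) ∨ (R ∩ T)`.
First, with `T' = T ∨ (R ∩ S) ≥ R ∩ S`, a pair in `R ∩ (S ∘ T ∘ S)` lies in `T'`, i.e. in
`T ∘ (R ∩ S) ∘ T`. Second, with `T'' = (R ∩ T) ∨ (R ∩ S) ≥ R ∩ T`, the same pair, now in
`R ∩ (T ∘ T'' ∘ T)`, lies in `T''`, which is `(R ∩ S) ∨ (R ∩ T)` by 3-permutability. The joins are equivalence relations because
`A ∘ B ∘ A = B ∘ A ∘ B` makes `A ∘ B ∘ A` transitive.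
-/

namespace Join3

variable {X : Type*} {A B C D : X → X → Prop}

theorem mono (hAC : A ≤ C) (hBD : B ≤ D) : Join3 A B ≤ Join3 C D := by
  rintro x y ⟨a, ⟨b, hxb, hba⟩, hay⟩
  exact ⟨a, ⟨b, hAC x b hxb, hBD b a hba⟩, hAC a y hay⟩

theorem left_le (hA : ∀ x, A x x) (hB : ∀ x, B x x) : A ≤ Join3 A B :=
  fun _ y hxy => ⟨y, ⟨y, hxy, hB y⟩, hA y⟩

theorem right_le (hA : ∀ x, A x x) : B ≤ Join3 A B :=
  fun x y hxy => ⟨y, ⟨x, hA x, hxy⟩, hA y⟩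

theorem self_le (hA : ∀ {x y z}, A x y → A y z → A x z) : Join3 A A ≤ A := by
  rintro x y ⟨a, ⟨b, hxb, hba⟩, hay⟩
  exact hA (hA hxb hba) hay

theorem equivalence (hA : Equivalence A) (hB : Equivalence B)
    (hperm : Join3 A B = Join3 B A) : Equivalence (Join3 A B) where
  refl x := left_le hA.refl hB.refl x x (hA.refl x)
  symm := by
    rintro x y ⟨a, ⟨b, hxb, hba⟩, hay⟩
    exact ⟨b, ⟨a, hA.symm hay, hB.symm hba⟩, hA.symm hxb⟩
  trans := by
    rintro x z y ⟨a, ⟨b, hxb, hba⟩, haz⟩ ⟨c, ⟨d, hzd, hdc⟩, hcy⟩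
    -- the middle segment `b B a A d B c` is in `B ∘ A ∘ B = A ∘ B ∘ A`
    have hmid : Join3 A B b c := hperm ▸ ⟨d, ⟨a, hba, hA.trans haz hzd⟩, hdc⟩
    obtain ⟨e, ⟨f, hbf, hfe⟩, hec⟩ := hmid
    exact ⟨e, ⟨f, hA.trans hxb hbf, hfe⟩, hA.trans hec hcy⟩

end Join3

theorem Equivalence.inf_s5 {X : Type*} {R S : X → X → Prop} (hR : Equivalence R)
    (hS : Equivalence S) : Equivalence (R ⊓ S) :=
  ⟨fun x => ⟨hR.refl x, hS.refl x⟩,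
   fun h => ⟨hR.symm h.1, hS.symm h.2⟩,
   fun h h' => ⟨hR.trans h.1 h'.1, hS.trans h.2 h'.2⟩⟩

theorem distrib_of_trapezoid_threePermutable_general {X : Type*}
    (h3Perm : ∀ R S : X → X → Prop, Equivalence R → Equivalence S →
      Join3 R S = Join3 S R)
    (hTpL : ∀ R S T : X → X → Prop, Equivalence R → Equivalence S → Equivalence T →
      (∀ x y, R x y → S x y → T x y) →
      ∀ u v, R u v → Comp S (Comp T S) u v → T u v) :
    ∀ R S T : X → X → Prop, Equivalence R → Equivalence S → Equivalence T →
      ∀ x y, (R x y ∧ Join3 S T x y) ↔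
        Join3 (fun a b => R a b ∧ S a b) (fun a b => R a b ∧ T a b) x y := by
  intro R S T hR hS hT x y
  have hRS : Equivalence (R ⊓ S) := hR.inf_s5 hS
  have hRT : Equivalence (R ⊓ T) := hR.inf_s5 hT
  have hjoin {A B : X → X → Prop} (hA : Equivalence A) (hB : Equivalence B) :
      Equivalence (Join3 A B) :=
    Join3.equivalence hA hB (h3Perm A B hA hB)
  constructor
  · rintro ⟨hRxy, hSTxy⟩
    have hT_RS : Join3 T (R ⊓ S) x y :=
      hTpL R S _ hR hS (hjoin hT hRS)
        (fun u v hRuv hSuv => Join3.right_le hT.refl u v ⟨hRuv, hSuv⟩) x y hRxy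
        (Join3.mono le_rfl (Join3.left_le hT.refl hRS.refl) x y hSTxy)
    have hRT_RS : Join3 (R ⊓ T) (R ⊓ S) x y :=
      hTpL R T _ hR hT (hjoin hRT hRS)
        (fun u v hRuv hTuv => Join3.left_le hRT.refl hRS.refl u v ⟨hRuv, hTuv⟩) x y hRxy
        (Join3.mono le_rfl (Join3.right_le hRT.refl) x y hT_RS)
    exact h3Perm _ _ hRS hRT ▸ hRT_RS
  · intro hxy
    have hRR : Join3 R R x y := Join3.mono (inf_le_left : R ⊓ S ≤ R) inf_le_left x y hxy
    exact ⟨Join3.self_le (A := R) hR.trans x y hRR, Join3.mono inf_le_right inf_le_right x y hxy⟩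

/-- If equivalence relations on `X` are 3-permutable (`R∘S∘R = S∘R∘S`, giving the
join), then the Trapezoid Lemma implies distributivity of the lattice of
equivalence relations: `R ∩ (S ∨ T) = (R ∩ S) ∨ (R ∩ T)` with joins given by the
3-fold composites. -/
theorem distrib_of_trapezoid_threePermutable {X : Type*}
    (h3Perm : ∀ R S : X → X → Prop, Equivalence R → Equivalence S →
      Join3 R S = Join3 S R)
    (hJoinEquiv : ∀ R S : X → X → Prop, Equivalence R → Equivalence S →
      Equivalence (Join3 R S))
    (hTpL : ∀ R S T : X → X → Prop, Equivalence R → Equivalence S → Equivalence T →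
      (∀ x y, R x y → S x y → T x y) →
      ∀ u v, R u v → Comp S (Comp T S) u v → T u v) :
    ∀ R S T : X → X → Prop, Equivalence R → Equivalence S → Equivalence T →
      ∀ x y, (R x y ∧ Join3 S T x y) ↔
        Join3 (fun a b => R a b ∧ S a b) (fun a b => R a b ∧ T a b) x y :=
  distrib_of_trapezoid_threePermutable_general h3Perm hTpL
end

section
/- Let X be an algebra (a type with operations) equipped with two quaternary operations p and q satisfying p(x,y,y,z) = x, p(u,u,v,v) = q(u,u,v,v), and q(x,y,y,z) = z for all elements. If all congruences on X satisfy the Triangular Lemma, then all congruences on X satisfy the Trapezoid Lemma. -/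
/-!
With `m = p u u v v = q u u v v`, the Triangular Lemma applied to the triangle
`u —T— p u x y v —S— m`, `u —R— m` gives `T u m`, and applied to
`v —T— q u x y v —S— m`, `v —R— m` gives `T v m`; hence `T u v`.
-/

/-- An equivalence relation `E` is compatible with a quaternary operation `f`
when `f` preserves `E` componentwise. -/
def IsCompat4 {X : Type*} (f : X → X → X → X → X) (E : X → X → Prop) : Prop :=
  ∀ a a' b b' c c' d d', E a a' → E b b' → E c c' → E d d' →
    E (f a b c d) (f a' b' c' d')

theorem IsCompat4.reverse {X : Type*} {f : X → X → X → X → X} {E : X → X → Prop}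
    (hf : IsCompat4 f E) : IsCompat4 (fun a b c d => f d c b a) E :=
  fun _ _ _ _ _ _ _ _ ha hb hc hd => hf _ _ _ _ _ _ _ _ hd hc hb ha

theorem rel_pivot_of_triangular {X : Type*} {f : X → X → X → X → X}
    (hf : ∀ x y z, f x y y z = x) {R S T : X → X → Prop}
    (hR : ∀ a, R a a) (hS : ∀ a, S a a) (hT : ∀ a, T a a)
    (hfR : IsCompat4 f R) (hfS : IsCompat4 f S) (hfT : IsCompat4 f T)
    (htri : ∀ u y v, T u y → S y v → R u v → T u v)
    {x y u v : X} (hxy : T x y) (hxu : S x u) (hyv : S y v) (huv : R u v) :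
    T u (f u u v v) := by
  have hT_mid : T u (f u x y v) := by
    simpa only [hf] using hfT u u x x x y v v (hT u) (hT x) hxy (hT v)
  have hS_mid : S (f u x y v) (f u u v v) := hfS u u x u y v v v (hS u) hxu hyv (hS v)
  have hR_end : R u (f u u v v) := by
    simpa only [hf] using hfR u u u u u v u v (hR u) (hR u) huv huv
  exact htri u _ _ hT_mid hS_mid hR_end

theorem trapezoid_of_triangular_quaternary_general {X : Type*} (p q : X → X → X → X → X)
    (hp : ∀ x y z, p x y y z = x)
    (hpq : ∀ u v, p u u v v = q u u v v)
    (hq : ∀ x y z, q x y y z = z)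
    (hTL : ∀ R S T : X → X → Prop,
      Equivalence R → Equivalence S → Equivalence T →
      IsCompat4 p R → IsCompat4 q R → IsCompat4 p S → IsCompat4 q S →
      IsCompat4 p T → IsCompat4 q T →
      (∀ x y, R x y → S x y → T x y) →
      ∀ u y v, T u y → S y v → R u v → T u v) :
    ∀ R S T : X → X → Prop,
      Equivalence R → Equivalence S → Equivalence T →
      IsCompat4 p R → IsCompat4 q R → IsCompat4 p S → IsCompat4 q S →
      IsCompat4 p T → IsCompat4 q T →
      (∀ x y, R x y → S x y → T x y) →
      ∀ x y u v, T x y → S x u → S y v → R u v → T u v := by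
  intro R S T hR hS hT hpR hqR hpS hqS hpT hqT hRS x y u v hxy hxu hyv huv
  have htri := hTL R S T hR hS hT hpR hqR hpS hqS hpT hqT hRS
  have hu : T u (p u u v v) :=
    rel_pivot_of_triangular hp hR.refl hS.refl hT.refl hpR hpS hpT htri hxy hxu hyv huv
  have hv : T v (q u u v v) :=
    rel_pivot_of_triangular (f := fun a b c d => q d c b a) (fun x y z => hq z y x)
      hR.refl hS.refl hT.refl hqR.reverse hqS.reverse hqT.reverse htri
      (hT.symm hxy) hyv hxu (hR.symm huv)
  exact hT.trans hu (hT.symm (hpq u v ▸ hv))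

/-- For an algebra with quaternary operations `p, q` satisfying
`p x y y z = x`, `p u u v v = q u u v v`, `q x y y z = z`
(i.e. a 3-permutable algebra): if all congruences satisfy the Triangular Lemma
(and the Shifting Lemma, which follows from 3-permutability), then all
congruences satisfy the Trapezoid Lemma. -/
theorem trapezoid_of_triangular_quaternary {X : Type*} (p q : X → X → X → X → X)
    (hp : ∀ x y z, p x y y z = x)
    (hpq : ∀ u v, p u u v v = q u u v v)
    (hq : ∀ x y z, q x y y z = z)
    (hTL : ∀ R S T : X → X → Prop,
      Equivalence R → Equivalence S → Equivalence T →
      IsCompat4 p R → IsCompat4 q R → IsCompat4 p S → IsCompat4 q S →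
      IsCompat4 p T → IsCompat4 q T →
      (∀ x y, R x y → S x y → T x y) →
      ∀ u y v, T u y → S y v → R u v → T u v)
    (hSL : ∀ R S T : X → X → Prop,
      Equivalence R → Equivalence S → Equivalence T →
      IsCompat4 p R → IsCompat4 q R → IsCompat4 p S → IsCompat4 q S →
      IsCompat4 p T → IsCompat4 q T →
      (∀ x y, R x y → S x y → T x y) →
      ∀ x y u v, R x y → T x y → S x u → S y v → R u v → T u v) :
    ∀ R S T : X → X → Prop,
      Equivalence R → Equivalence S → Equivalence T →
      IsCompat4 p R → IsCompat4 q R → IsCompat4 p S → IsCompat4 q S →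
      IsCompat4 p T → IsCompat4 q T →
      (∀ x y, R x y → S x y → T x y) →
      ∀ x y u v, T x y → S x u → S y v → R u v → T u v :=
  trapezoid_of_triangular_quaternary_general p q hp hpq hq hTL
end

section
/- Let X be a set with a ternary operation m satisfying the majority identities m(x,x,y) = x, m(x,y,x) = x, m(y,x,x) = x. Then for all congruences (equivalence relations compatible with m) R, S, T on X: R ∩ (S ∘ T) ≤ (R ∩ S) ∘ (R ∩ T). -/
/-! The witness is `m x y z`: replacing one argument at a time and collapsing with the
majority identities links it to `x` through `R ∩ T` and to `z` through `R ∩ S`. -/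

/-- A congruence on `(X, m)` for a ternary operation `m`: an equivalence relation
compatible with `m`. -/
def IsCong3 {X : Type*} (m : X → X → X → X) (E : X → X → Prop) : Prop :=
  Equivalence E ∧
    ∀ a a' b b' c c', E a a' → E b b' → E c c' → E (m a b c) (m a' b' c')

namespace IsCong3

variable {X : Type*} {m : X → X → X → X} {E : X → X → Prop}

theorem congr_left (hE : IsCong3 m E) {a a' : X} (h : E a a') (b c : X) :
    E (m a b c) (m a' b c) :=
  hE.2 _ _ _ _ _ _ h (hE.1.refl b) (hE.1.refl c)

theorem congr_mid (hE : IsCong3 m E) (a : X) {b b' : X} (h : E b b') (c : X) :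
    E (m a b c) (m a b' c) :=
  hE.2 _ _ _ _ _ _ (hE.1.refl a) h (hE.1.refl c)

theorem congr_right (hE : IsCong3 m E) (a b : X) {c c' : X} (h : E c c') :
    E (m a b c) (m a b c') :=
  hE.2 _ _ _ _ _ _ (hE.1.refl a) (hE.1.refl b) h

end IsCong3

/-- For an algebra with a majority operation `m`, all congruences satisfy
`R ∩ (S ∘ T) ≤ (R ∩ S) ∘ (R ∩ T)`. -/
theorem majority_inequality {X : Type*} (m : X → X → X → X)
    (h1 : ∀ x y, m x x y = x) (h2 : ∀ x y, m x y x = x) (h3 : ∀ x y, m y x x = x)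
    (R S T : X → X → Prop)
    (hR : IsCong3 m R) (hS : IsCong3 m S) (hT : IsCong3 m T) :
    ∀ x z, R x z → (∃ y, T x y ∧ S y z) →
      ∃ y, (R x y ∧ T x y) ∧ (R y z ∧ S y z) := by
  rintro x z hxz ⟨y, hxy, hyz⟩
  refine ⟨m x y z, ⟨?_, ?_⟩, ?_, ?_⟩
  · simpa only [h2] using hR.congr_right x y hxz
  · simpa only [h1] using hT.congr_mid x hxy z
  · simpa only [h2] using hR.congr_left hxz y z
  · simpa only [h3] using hS.congr_mid x hyz z
end

section
/- Let X be a set with quaternary operations p, q satisfying p(x,y,y,z) = x, p(u,u,v,v) = q(u,u,v,v), q(x,y,y,z) = z. Then congruences on X 3-permute: R ∘ S ∘ R = S ∘ R ∘ S for all congruences R, S on X. -/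
/-!
If `x R a S b R z`, then `p x a b z` and `q x a b z` witness `x S ∘ R ∘ S z`: replacing `b` by `a`
(resp. `a` by `b`) is an `S`-step that collapses `p` to `x` (resp. `q` to `z`), while replacing
`x` by `a` and `z` by `b` are `R`-steps that meet at `p a a b b = q a a b b`.
The reverse inclusion is the same argument with `R` and `S` exchanged.
-/

/-- A congruence on `X` for quaternary operations: an equivalence relation
compatible with the operation componentwise. -/
def IsCong4 {X : Type*} (f : X → X → X → X → X) (E : X → X → Prop) : Prop :=
  Equivalence E ∧
    ∀ a a' b b' c c' d d', E a a' → E b b' → E c c' → E d d' →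
      E (f a b c d) (f a' b' c' d')

namespace IsCong4

variable {X : Type*} {p q : X → X → X → X → X} {E : X → X → Prop}

theorem rel_left_of_rel_middle (hE : IsCong4 p E) (hp : ∀ x y z, p x y y z = x)
    {a b : X} (hab : E a b) (x z : X) : E x (p x a b z) := by
  have h := hE.2 x x a a a b z z (hE.1.refl x) (hE.1.refl a) hab (hE.1.refl z)
  rwa [hp] at h

theorem rel_right_of_rel_middle (hE : IsCong4 q E) (hq : ∀ x y z, q x y y z = z)
    {a b : X} (hab : E a b) (x z : X) : E (q x a b z) z := by
  have h := hE.2 x x a b b b z z (hE.1.refl x) hab (hE.1.refl b) (hE.1.refl z)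
  rwa [hq] at h

theorem rel_of_rel_outer (hEp : IsCong4 p E) (hEq : IsCong4 q E)
    (hpq : ∀ u v, p u u v v = q u u v v) {x a b z : X} (hxa : E x a) (hbz : E b z) :
    E (p x a b z) (q x a b z) := by
  have hp_aabb : E (p x a b z) (p a a b b) :=
    hEp.2 x a a a b b z b hxa (hEp.1.refl a) (hEp.1.refl b) (hEp.1.symm hbz)
  have hq_aabb : E (q a a b b) (q x a b z) :=
    hEq.2 a x a a b b b z (hEq.1.symm hxa) (hEq.1.refl a) (hEq.1.refl b) hbz
  rw [hpq] at hp_aabb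
  exact hEp.1.trans hp_aabb hq_aabb

end IsCong4

theorem exists_comp_three_swap {X : Type*} {p q : X → X → X → X → X}
    (hp : ∀ x y z, p x y y z = x) (hpq : ∀ u v, p u u v v = q u u v v)
    (hq : ∀ x y z, q x y y z = z) {R S : X → X → Prop}
    (hRp : IsCong4 p R) (hRq : IsCong4 q R) (hSp : IsCong4 p S) (hSq : IsCong4 q S)
    {x z : X} (h : ∃ a b, R x a ∧ S a b ∧ R b z) : ∃ a b, S x a ∧ R a b ∧ S b z := by
  obtain ⟨a, b, hxa, hab, hbz⟩ := h
  exact ⟨p x a b z, q x a b z, hSp.rel_left_of_rel_middle hp hab x z,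
    hRp.rel_of_rel_outer hRq hpq hxa hbz, hSq.rel_right_of_rel_middle hq hab x z⟩

/-- For an algebra with quaternary operations `p, q` satisfying
`p x y y z = x`, `p u u v v = q u u v v`, `q x y y z = z`,
congruences 3-permute: `R ∘ S ∘ R = S ∘ R ∘ S`. -/
theorem congruences_three_permute {X : Type*} (p q : X → X → X → X → X)
    (hp : ∀ x y z, p x y y z = x)
    (hpq : ∀ u v, p u u v v = q u u v v)
    (hq : ∀ x y z, q x y y z = z)
    (R S : X → X → Prop)
    (hRp : IsCong4 p R) (hRq : IsCong4 q R)
    (hSp : IsCong4 p S) (hSq : IsCong4 q S) :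
    ∀ x z, (∃ a b, R x a ∧ S a b ∧ R b z) ↔ (∃ a b, S x a ∧ R a b ∧ S b z) :=
  fun _ _ => ⟨exists_comp_three_swap hp hpq hq hRp hRq hSp hSq,
    exists_comp_three_swap hp hpq hq hSp hSq hRp hRq⟩
end

section
/- Let X be a set on which every reflexive and positive relation is an equivalence relation, where positive means of the form P⁻¹ ∘ P. Suppose the Triangular Lemma holds on X whenever S is reflexive and R, T are reflexive and positive relations. Then every reflexive relation E on X satisfies E ∘ E⁻¹ ≤ E⁻¹ ∘ E. -/
/-- A relation `E` on `X` is positive when `E = P⁻¹ ∘ P` for some relation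
`P` from `X` to some set `Y`. -/
def IsPositive {X : Type} (E : X → X → Prop) : Prop :=
  ∃ (Y : Type) (P : X → Y → Prop), ∀ x x', E x x' ↔ ∃ y, P x y ∧ P x' y

/-!
Apply the Triangular Lemma to `R = E ∘ E⁻¹`, `S = E`, `T = E⁻¹ ∘ E`, which are reflexive and
(for `R`, `T`) positive, with `R ∩ S ≤ S ≤ T`. Given `z` with `E z x` and `E z y`, the triangle
`T x z`, `S z y`, `R x y` is closed (`T x z` is witnessed by `x` itself), so `T x y`.
-/

section Relation

variable {X : Type}

theorem Reflexive.relationComp {r p : X → X → Prop} (hr : Reflexive r) (hp : Reflexive p) :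
    Reflexive (Relation.Comp r p) :=
  fun a => ⟨a, hr a, hp a⟩

theorem isPositive_comp_flip {Y : Type} (P : X → Y → Prop) :
    IsPositive (Relation.Comp P (flip P)) :=
  ⟨Y, P, fun _ _ => Iff.rfl⟩

theorem Reflexive.le_comp_flip {E : X → X → Prop} (hE : Reflexive E) {a b : X} (h : E a b) :
    Relation.Comp E (flip E) a b :=
  ⟨b, h, hE b⟩

end Relation

theorem goursat_of_triangular_positive_general {X : Type}
    (hTL : ∀ R S T : X → X → Prop,
      Reflexive S → Reflexive R → IsPositive R → Reflexive T → IsPositive T →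
      (∀ x y, R x y → S x y → T x y) →
      ∀ x z y, T x z → S z y → R x y → T x y) :
    ∀ E : X → X → Prop, Reflexive E →
      ∀ x y, (∃ z, E z x ∧ E z y) → (∃ z, E x z ∧ E y z) := by
  intro E hE x y ⟨z, hzx, hzy⟩
  have hEE' : Reflexive (Relation.Comp (flip E) E) := Reflexive.relationComp hE hE
  have hE'E : Reflexive (Relation.Comp E (flip E)) := Reflexive.relationComp hE hE
  exact hTL (Relation.Comp (flip E) E) E (Relation.Comp E (flip E)) hE
    hEE' (isPositive_comp_flip (flip E)) hE'E (isPositive_comp_flip E)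
    (fun _ _ _ h => hE.le_comp_flip h) x z y ⟨x, hE x, hzx⟩ hzy ⟨z, hzx, hzy⟩

/-- Suppose every reflexive positive relation on `X` is an equivalence relation,
and the Triangular Lemma holds on `X` whenever `S` is reflexive and `R, T` are
reflexive and positive. Then every reflexive relation `E` on `X` satisfies
`E ∘ E⁻¹ ≤ E⁻¹ ∘ E`. -/
theorem goursat_of_triangular_positive {X : Type}
    (hPos : ∀ E : X → X → Prop, Reflexive E → IsPositive E → Equivalence E)
    (hTL : ∀ R S T : X → X → Prop,
      Reflexive S → Reflexive R → IsPositive R → Reflexive T → IsPositive T →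
      (∀ x y, R x y → S x y → T x y) →
      ∀ x z y, T x z → S z y → R x y → T x y) :
    ∀ E : X → X → Prop, Reflexive E →
      ∀ x y, (∃ z, E z x ∧ E z y) → (∃ z, E x z ∧ E y z) :=
  goursat_of_triangular_positive_general hTL
end
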